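/- arXiv:1807.00636 — 6 statements merged into one kernel-verified Lean document; each statement's English description precedes it below -/
import Mathlib

section
/- Let (σ_t)_{t ≥ 1} be an increasing positive real sequence with bounded differences σ_t − σ_{t−1} ≤ c for a finite constant c > 0, and set σ_0 = 0. Then for every T ≥ 1: Σ_{t=1}^T σ_t · ( 1/√(σ_{t−1} + c) − 1/√(σ_t + c) ) ≤ 2√(σ_{T−1} + c). -/
/-! Since `σ_t ≤ σ_{t-1} + c =: a`, each summand is at most `a (1/√a - 1/√b) = (√b - √a) · √a/√b`
with `b = σ_t + c`, hence at most `√b - √a`. The sum therefore telescopes to at most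
`√(σ_T + c) - √c`, and `√(σ_T + c) ≤ √(σ_{T-1} + 2c) ≤ √(σ_{T-1} + c) + √c`. -/

open Real Finset

lemma sqrt_add_le_sqrt_add_sqrt {x y : ℝ} (hx : 0 ≤ x) (hy : 0 ≤ y) : √(x + y) ≤ √x + √y := by
  rw [sqrt_le_left (by positivity), add_sq, sq_sqrt hx, sq_sqrt hy]
  nlinarith [mul_nonneg (sqrt_nonneg x) (sqrt_nonneg y)]

lemma mul_one_div_sqrt_sub_one_div_sqrt_le {s a b : ℝ} (ha : 0 < a) (hab : a ≤ b) (hs : s ≤ a) :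
    s * (1 / √a - 1 / √b) ≤ √b - √a := by
  have hsa : 0 < √a := sqrt_pos.mpr ha
  have hsab : √a ≤ √b := sqrt_le_sqrt hab
  have hsb : 0 < √b := hsa.trans_le hsab
  have hgap : 0 ≤ 1 / √a - 1 / √b := sub_nonneg.mpr (one_div_le_one_div_of_le hsa hsab)
  calc s * (1 / √a - 1 / √b)
      ≤ a * (1 / √a - 1 / √b) := mul_le_mul_of_nonneg_right hs hgap
    _ = (√b - √a) * (√a / √b) := by
        field_simp
        rw [sq_sqrt ha.le]
    _ ≤ √b - √a := mul_le_of_le_one_right (sub_nonneg.mpr hsab) ((div_le_one hsb).mpr hsab)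

lemma sum_Icc_one_sub_pred (f : ℕ → ℝ) (T : ℕ) :
    ∑ t ∈ Icc 1 T, (f t - f (t - 1)) = f T - f 0 := by
  induction T with
  | zero => simp
  | succ n ih =>
    rw [sum_Icc_succ_top (Nat.le_add_left 1 n), ih]
    simp

/-- Let `(σ_t)_{t ≥ 1}` be an increasing positive real sequence with bounded
differences `σ_t − σ_{t−1} ≤ c` for a finite constant `c > 0`, and set `σ_0 = 0`. Then for
every `T ≥ 1`:
`Σ_{t=1}^T σ_t · ( 1/√(σ_{t−1} + c) − 1/√(σ_t + c) ) ≤ 2√(σ_{T−1} + c)`. -/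
theorem soda_technical_lemma
    (σ : ℕ → ℝ) (c : ℝ) (hc : 0 < c)
    (h0 : σ 0 = 0) (hmono : StrictMono σ)
    (hdiff : ∀ t : ℕ, 1 ≤ t → σ t - σ (t - 1) ≤ c)
    (T : ℕ) (hT : 1 ≤ T) :
    ∑ t ∈ Finset.Icc 1 T,
        σ t * (1 / Real.sqrt (σ (t - 1) + c) - 1 / Real.sqrt (σ t + c))
      ≤ 2 * Real.sqrt (σ (T - 1) + c) := by
  have hσ : ∀ t, 0 ≤ σ t := fun t => h0 ▸ hmono.monotone (Nat.zero_le t)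
  have hsum : ∑ t ∈ Icc 1 T, σ t * (1 / √(σ (t - 1) + c) - 1 / √(σ t + c))
      ≤ √(σ T + c) - √c := by
    calc _ ≤ ∑ t ∈ Icc 1 T, (√(σ t + c) - √(σ (t - 1) + c)) := by
          refine sum_le_sum fun t ht => mul_one_div_sqrt_sub_one_div_sqrt_le ?_ ?_ ?_
          · linarith [hσ (t - 1)]
          · linarith [hmono.monotone (Nat.sub_le t 1)]
          · linarith [hdiff t (mem_Icc.mp ht).1]
      _ = √(σ T + c) - √c := by rw [sum_Icc_one_sub_pred (fun t => √(σ t + c)), h0, zero_add]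
  have hlast : √(σ T + c) ≤ √(σ (T - 1) + c) + √c :=
    calc √(σ T + c) ≤ √(σ (T - 1) + c + c) := sqrt_le_sqrt (by linarith [hdiff T hT])
      _ ≤ √(σ (T - 1) + c) + √c := sqrt_add_le_sqrt_add_sqrt (by linarith [hσ (T - 1)]) hc.le
  linarith [sqrt_nonneg (σ (T - 1) + c)]
end

section
/- Fix K ≥ 2 and real numbers D_a and S_a for a = 1,…,K, and define for η > 0 the potential Φ(η) = (1/η) ln( (1/K) Σ_{a=1}^K exp(−η D_a − η² S_a) ) and the distribution q^η(a) = exp(−η D_a − η² S_a) / Σ_{a'=1}^K exp(−η D_{a'} − η² S_{a'}). Then Φ is differentiable on (0,∞) and Φ'(η) = (1/η²) · KL(q^η ‖ u) − Σ_{a=1}^K q^η(a) S_a, where u is the uniform distribution on {1,…,K} and KL(q ‖ u) = Σ_a q(a) ln( q(a)/(1/K) ) is the Kullback–Leibler divergence. -/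
/-!
Write `g_a(x) = -x D_a - x² S_a` and `L(x) = log((1/K) Σ_a exp g_a(x))`, so that `Φ = L / x`.
The derivative of a log-sum-exp is the softmax average of the derivatives, `L' = Σ_a q_a g_a'`,
and the divergence of the softmax distribution from the uniform one is `KL(q ‖ u) = Σ_a q_a g_a - L`.
In the product rule `Φ' = L'/η - L/η²` the `-L/η²` term is then exactly the `L` part of
`KL(q ‖ u)/η²`, and what remains is an identity between `q`-averages of affine functions of `D, S`.
-/

open Finset Real

variable {ι : Type*} [Fintype ι]

noncomputable def softmax (g : ι → ℝ) (a : ι) : ℝ :=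
  exp (g a) / ∑ b, exp (g b)

lemma sum_exp_pos [Nonempty ι] (g : ι → ℝ) : 0 < ∑ a, exp (g a) :=
  sum_pos (fun a _ => exp_pos (g a)) univ_nonempty

lemma sum_softmax [Nonempty ι] (g : ι → ℝ) : ∑ a, softmax g a = 1 := by
  simp only [softmax, ← sum_div, div_self (sum_exp_pos g).ne']

lemma sum_softmax_mul_log_div_uniform [Nonempty ι] (g : ι → ℝ) :
    ∑ a, softmax g a * log (softmax g a / (1 / Fintype.card ι)) =
      ∑ a, softmax g a * g a - log ((1 / Fintype.card ι) * ∑ a, exp (g a)) := by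
  have hlog_softmax (a : ι) : log (softmax g a / (1 / Fintype.card ι)) =
      g a - log ((1 / Fintype.card ι) * ∑ b, exp (g b)) := by
    rw [softmax, div_div, log_div (exp_pos _).ne' (by positivity), log_exp, mul_comm]
  simp only [hlog_softmax, mul_sub, sum_sub_distrib, ← sum_mul, sum_softmax, one_mul]

lemma hasDerivAt_log_const_mul_sum_exp [Nonempty ι] {c : ℝ} (hc : c ≠ 0)
    {g : ι → ℝ → ℝ} {g' : ι → ℝ} {x : ℝ} (hg : ∀ a, HasDerivAt (g a) (g' a) x) :
    HasDerivAt (fun y => log (c * ∑ a, exp (g a y)))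
      (∑ a, softmax (g · x) a * g' a) x := by
  have hZ := sum_exp_pos (g · x)
  have hsum : HasDerivAt (fun y => c * ∑ a, exp (g a y)) (c * ∑ a, exp (g a x) * g' a) x :=
    (HasDerivAt.fun_sum fun a _ => (hg a).exp).const_mul c
  convert hsum.log (mul_ne_zero hc hZ.ne') using 1
  rw [mul_div_mul_left _ _ hc, sum_div]
  exact sum_congr rfl fun a _ => by rw [softmax, div_mul_eq_mul_div]

/-- Fix `K ≥ 2` and real numbers `D_a`, `S_a` for `a = 1,…,K`, and define for
`η > 0` the potential `Φ(η) = (1/η) ln( (1/K) Σ_a exp(−η D_a − η² S_a) )` and the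
distribution `q^η(a) = exp(−η D_a − η² S_a) / Σ_{a'} exp(−η D_{a'} − η² S_{a'})`.
Then `Φ` is differentiable on `(0,∞)` with
`Φ'(η) = (1/η²) · KL(q^η ‖ u) − Σ_a q^η(a) S_a`, where `u` is uniform on `{1,…,K}` and
`KL(q ‖ u) = Σ_a q(a) ln( q(a)/(1/K) )`. -/
theorem potential_derivative
    (K : ℕ) (hK : 2 ≤ K) (D S : Fin K → ℝ)
    (q : ℝ → Fin K → ℝ)
    (hq : ∀ η a, q η a = Real.exp (-η * D a - η ^ 2 * S a) /
        ∑ a', Real.exp (-η * D a' - η ^ 2 * S a'))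
    (η : ℝ) (hη : 0 < η) :
    HasDerivAt
      (fun x : ℝ => (1 / x) * Real.log ((1 / K) * ∑ a, Real.exp (-x * D a - x ^ 2 * S a)))
      ((1 / η ^ 2) * (∑ a, q η a * Real.log (q η a / (1 / K))) - ∑ a, q η a * S a)
      η := by
  have : Nonempty (Fin K) := ⟨⟨0, by omega⟩⟩
  have hq_softmax : q η = softmax (fun a => -η * D a - η ^ 2 * S a) := funext (hq η)
  have hg (a : Fin K) : HasDerivAt (fun x : ℝ => -x * D a - x ^ 2 * S a) (-D a - 2 * η * S a) η :=
    (((hasDerivAt_id η).neg.mul_const (D a)).sub ((hasDerivAt_pow 2 η).mul_const (S a))).congr_deriv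
      (by ring)
  have hL := hasDerivAt_log_const_mul_sum_exp (c := 1 / (K : ℝ)) (by positivity) hg
  have hinv : HasDerivAt (fun x : ℝ => 1 / x) (-(1 / η ^ 2)) η := by
    simpa only [one_div, inv_pow] using hasDerivAt_inv hη.ne'
  have hKL := sum_softmax_mul_log_div_uniform (fun a => -η * D a - η ^ 2 * S a)
  rw [Fintype.card_fin] at hKL
  set p := softmax fun a => -η * D a - η ^ 2 * S a
  have hlinear : 1 / η ^ 2 * ∑ a, p a * (-η * D a - η ^ 2 * S a) - ∑ a, p a * S a =
      1 / η * ∑ a, p a * (-D a - 2 * η * S a) := by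
    simp only [mul_sum, ← sum_sub_distrib]
    exact sum_congr rfl fun a _ => by field_simp; ring
  refine (hinv.fun_mul hL).congr_deriv ?_
  rw [hq_softmax, hKL]
  linear_combination -hlinear
end

section
/- Fix K ≥ 2 and real numbers D_a and nonnegative real numbers S_a for a = 1,…,K, and define for η > 0 the potential Φ(η) = (1/η) ln( (1/K) Σ_{a=1}^K exp(−η D_a − η² S_a) ). Then for any 0 < η' ≤ η: Φ(η') − Φ(η) ≤ (η − η') · max_a S_a. -/
/-!
Write `M = max_a S_a` and `y_a = -D_a + η (M - S_a)`. Completing the exponent,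
`Φ(t) + t M = (1/t) ln mean_a exp(t (-D_a + t (M - S_a)))`. At `t = η'` the inner `t` may be raised
to `η`, since `M - S_a ≥ 0`; what remains is `(1/t) ln mean_a exp(t y_a)`, which is nondecreasing
in `t > 0` by the power-mean inequality (Jensen for `z ↦ z ^ (η / η')`). Hence
`Φ(η') + η' M ≤ Φ(η) + η M`.
-/

open Finset Real

section WeightedExpSum

variable {ι : Type*} {s : Finset ι} {w : ι → ℝ}

lemma sum_mul_exp_pos (hw : ∀ i ∈ s, 0 ≤ w i) (hw1 : ∑ i ∈ s, w i = 1) (x : ι → ℝ) :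
    0 < ∑ i ∈ s, w i * exp (x i) := by
  obtain ⟨i, hi, hwi⟩ := exists_ne_zero_of_sum_ne_zero (hw1.trans_ne one_ne_zero)
  exact sum_pos' (fun j hj => by have := hw j hj; positivity)
    ⟨i, hi, mul_pos ((hw i hi).lt_of_ne' hwi) (exp_pos _)⟩

lemma log_sum_mul_exp_add_const {x : ι → ℝ} (h : ∑ i ∈ s, w i * exp (x i) ≠ 0) (c : ℝ) :
    log (∑ i ∈ s, w i * exp (x i + c)) = log (∑ i ∈ s, w i * exp (x i)) + c := by
  simp_rw [exp_add, ← mul_assoc, ← sum_mul]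
  rw [log_mul h (exp_ne_zero c), log_exp]

lemma log_sum_mul_exp_le_of_le (hw : ∀ i ∈ s, 0 ≤ w i) (hw1 : ∑ i ∈ s, w i = 1)
    {x y : ι → ℝ} (hxy : ∀ i ∈ s, x i ≤ y i) :
    log (∑ i ∈ s, w i * exp (x i)) ≤ log (∑ i ∈ s, w i * exp (y i)) :=
  log_le_log (sum_mul_exp_pos hw hw1 x) <| sum_le_sum fun i hi =>
    mul_le_mul_of_nonneg_left (exp_le_exp.2 (hxy i hi)) (hw i hi)

lemma inv_mul_log_sum_mul_exp_mul_le (hw : ∀ i ∈ s, 0 ≤ w i) (hw1 : ∑ i ∈ s, w i = 1)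
    (y : ι → ℝ) {t u : ℝ} (ht : 0 < t) (htu : t ≤ u) :
    t⁻¹ * log (∑ i ∈ s, w i * exp (t * y i)) ≤ u⁻¹ * log (∑ i ∈ s, w i * exp (u * y i)) := by
  have hu : 0 < u := ht.trans_le htu
  have hexp_rpow : ∀ i, exp (t * y i) ^ (u / t) = exp (u * y i) := fun i => by
    rw [← exp_mul]; congr 1; field_simp
  have power_mean := rpow_arith_mean_le_arith_mean_rpow s w (fun i => exp (t * y i)) hw hw1
    (fun i _ => (exp_pos _).le) ((one_le_div ht).2 htu)
  simp only [hexp_rpow] at power_mean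
  have hlog := log_le_log (by have := sum_mul_exp_pos hw hw1 (t * y ·); positivity) power_mean
  rw [log_rpow (sum_mul_exp_pos hw hw1 _)] at hlog
  calc t⁻¹ * log (∑ i ∈ s, w i * exp (t * y i))
      = u⁻¹ * (u / t * log (∑ i ∈ s, w i * exp (t * y i))) := by field_simp
    _ ≤ u⁻¹ * log (∑ i ∈ s, w i * exp (u * y i)) := by gcongr

end WeightedExpSum

theorem potential_difference_bound_general
    (K : ℕ) (hK : 2 ≤ K) (D S : Fin K → ℝ)
    (Φ : ℝ → ℝ)
    (hΦ : ∀ η : ℝ, Φ η = (1 / η) * Real.log ((1 / K) * ∑ a, Real.exp (-η * D a - η ^ 2 * S a)))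
    (η' η : ℝ) (hη' : 0 < η') (hle : η' ≤ η) :
    Φ η' - Φ η ≤ (η - η') * ⨆ a, S a := by
  set M := ⨆ a, S a
  have hSM : ∀ a, S a ≤ M := le_ciSup (Set.finite_range S).bddAbove
  set w : Fin K → ℝ := fun _ => 1 / K
  have hw : ∀ a ∈ univ, 0 ≤ w a := fun _ _ => by positivity
  have hw1 : ∑ a, w a = 1 := by
    simp only [w, sum_const, card_univ, Fintype.card_fin, nsmul_eq_mul]
    field_simp [show (K : ℝ) ≠ 0 by norm_cast; omega]
  have hΦ_add : ∀ t, Φ t + t * M = t⁻¹ * log (∑ a, w a * exp (t * (-D a + t * (M - S a)))) := by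
    intro t
    have hexp : ∀ a, t * (-D a + t * (M - S a)) = (-t * D a - t ^ 2 * S a) + t ^ 2 * M :=
      fun a => by ring
    simp only [hexp]
    rw [log_sum_mul_exp_add_const (sum_mul_exp_pos hw hw1 _).ne', hΦ, ← mul_sum]
    rcases eq_or_ne t 0 with rfl | ht
    · simp
    · field_simp
  suffices Φ η' + η' * M ≤ Φ η + η * M by linarith
  calc Φ η' + η' * M
      ≤ η'⁻¹ * log (∑ a, w a * exp (η' * (-D a + η * (M - S a)))) := by
        rw [hΦ_add]
        refine mul_le_mul_of_nonneg_left (log_sum_mul_exp_le_of_le hw hw1 fun a _ => ?_)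
          (inv_nonneg.2 hη'.le)
        have := hSM a
        gcongr
    _ ≤ η⁻¹ * log (∑ a, w a * exp (η * (-D a + η * (M - S a)))) :=
        inv_mul_log_sum_mul_exp_mul_le hw hw1 _ hη' hle
    _ = Φ η + η * M := (hΦ_add η).symm

/-- Fix `K ≥ 2`, real numbers `D_a` and nonnegative real numbers `S_a` for
`a = 1,…,K`, and define for `η > 0` the potential
`Φ(η) = (1/η) ln( (1/K) Σ_a exp(−η D_a − η² S_a) )`.
Then for any `0 < η' ≤ η`: `Φ(η') − Φ(η) ≤ (η − η') · max_a S_a`. -/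
theorem potential_difference_bound
    (K : ℕ) (hK : 2 ≤ K) (D S : Fin K → ℝ) (hS : ∀ a, 0 ≤ S a)
    (Φ : ℝ → ℝ)
    (hΦ : ∀ η : ℝ, Φ η = (1 / η) * Real.log ((1 / K) * ∑ a, Real.exp (-η * D a - η ^ 2 * S a)))
    (η' η : ℝ) (hη' : 0 < η') (hle : η' ≤ η) :
    Φ η' - Φ η ≤ (η - η') * ⨆ a, S a :=
  potential_difference_bound_general K hK D S Φ hΦ η' η hη' hle
end

section
/- Let K ≥ 2 and let D_t(a) be arbitrary reals and S_t(a) nonnegative reals for t ≥ 0 and a = 1,…,K, with S_0(a) = 0, S_t(a) nondecreasing in t, and S_t(a) − S_{t−1}(a) ≤ (K−1)² for all t and a. Define Φ_t(η) = (1/η) ln( (1/K) Σ_{a=1}^K exp(−η D_t(a) − η² S_t(a)) ) and learning rates η_t = √( ln K / (max_a S_{t−1}(a) + (K−1)²) ). Then for every T ≥ 1: Σ_{t=1}^T ( Φ_t(η_{t+1}) − Φ_t(η_t) ) ≤ 2 √(ln K) · √( max_a S_{T−1}(a) + (K−1)² ). -/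
/-!
Write `Φ_t(x) = x⁻¹ log ∑ₐ wₐ exp (x yₐ)` with `y = -D_t - x S_t`. Lowering the rate from `c` to
`b ≤ c` moves `y` up pointwise by at most `(c - b) max S_t`, and `x ↦ x⁻¹ log ∑ₐ wₐ exp (x yₐ)`
is nondecreasing (a power mean of `exp ∘ y`), so `Φ_t(b) - Φ_t(c) ≤ (c - b) σ_t` with
`σ_t = maxₐ S_t(a)`. With `κ = (K-1)²` and `η_t = √(ln K) / √(σ_{t-1} + κ)`, the term
`σ_t (1/√(σ_{t-1} + κ) - 1/√(σ_t + κ))` is at most `√(σ_t + κ) - √(σ_{t-1} + κ)` because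
`σ_t ≤ σ_{t-1} + κ`; the sum telescopes, and `σ_T + κ ≤ 4 (σ_{T-1} + κ)`.
-/

open Real Finset

section LogMeanExp

variable {ι : Type*} [Fintype ι] {w : ι → ℝ}

noncomputable def logMeanExp (w y : ι → ℝ) (x : ℝ) : ℝ := x⁻¹ * log (∑ a, w a * exp (x * y a))

lemma sum_mul_exp_pos_s9 (hw₀ : ∀ a, 0 ≤ w a) (hw₁ : ∑ a, w a = 1) (y : ι → ℝ) :
    0 < ∑ a, w a * exp (y a) := by
  obtain ⟨a, -, ha⟩ := exists_ne_zero_of_sum_ne_zero (hw₁.trans_ne one_ne_zero)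
  exact sum_pos' (fun b _ => mul_nonneg (hw₀ b) (exp_pos _).le)
    ⟨a, mem_univ a, mul_pos ((hw₀ a).lt_of_ne' ha) (exp_pos _)⟩

lemma logMeanExp_le_add_of_le (hw₀ : ∀ a, 0 ≤ w a) (hw₁ : ∑ a, w a = 1) {y z : ι → ℝ}
    {C x : ℝ} (hx : 0 < x) (h : ∀ a, y a ≤ z a + C) :
    logMeanExp w y x ≤ logMeanExp w z x + C := by
  have hsum : ∑ a, w a * exp (x * y a) ≤ exp (x * C) * ∑ a, w a * exp (x * z a) := by
    rw [mul_sum]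
    refine sum_le_sum fun a _ => ?_
    rw [mul_left_comm, ← exp_add]
    gcongr
    · exact hw₀ a
    · nlinarith [h a]
  have hlog := log_le_log (sum_mul_exp_pos_s9 hw₀ hw₁ _) hsum
  rw [log_mul (exp_pos _).ne' (sum_mul_exp_pos_s9 hw₀ hw₁ _).ne', log_exp] at hlog
  unfold logMeanExp
  calc x⁻¹ * log (∑ a, w a * exp (x * y a))
      ≤ x⁻¹ * (x * C + log (∑ a, w a * exp (x * z a))) := by gcongr
    _ = _ := by field_simp; ring

/-- Power-mean monotonicity: Jensen for the concave map `t ↦ t ^ (b / c)`. -/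
lemma logMeanExp_mono (hw₀ : ∀ a, 0 ≤ w a) (hw₁ : ∑ a, w a = 1) (y : ι → ℝ) {b c : ℝ}
    (hb : 0 < b) (hbc : b ≤ c) : logMeanExp w y b ≤ logMeanExp w y c := by
  have hc : 0 < c := hb.trans_le hbc
  have hjensen : ∑ a, w a * exp (b * y a) ≤ (∑ a, w a * exp (c * y a)) ^ (b / c) := by
    refine le_of_eq_of_le (sum_congr rfl fun a _ => ?_)
      ((concaveOn_rpow (div_nonneg hb.le hc.le) ((div_le_one hc).2 hbc)).le_map_sum
        (fun a _ => hw₀ a) hw₁ (p := fun a => exp (c * y a)) fun a _ => (exp_pos _).le)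
    rw [smul_eq_mul, ← exp_mul, mul_right_comm, mul_div_cancel₀ _ hc.ne']
  have hlog := log_le_log (sum_mul_exp_pos_s9 hw₀ hw₁ _) hjensen
  rw [log_rpow (sum_mul_exp_pos_s9 hw₀ hw₁ _)] at hlog
  unfold logMeanExp
  calc b⁻¹ * log (∑ a, w a * exp (b * y a))
      ≤ b⁻¹ * (b / c * log (∑ a, w a * exp (c * y a))) := by gcongr
    _ = _ := by field_simp

noncomputable def potential (w D S : ι → ℝ) (x : ℝ) : ℝ :=
  logMeanExp w (fun a => -D a - x * S a) x

lemma potential_le_add_of_le (hw₀ : ∀ a, 0 ≤ w a) (hw₁ : ∑ a, w a = 1) (D : ι → ℝ)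
    {S : ι → ℝ} {M b c : ℝ} (hSM : ∀ a, S a ≤ M) (hb : 0 < b) (hbc : b ≤ c) :
    potential w D S b ≤ potential w D S c + (c - b) * M := by
  calc potential w D S b
      ≤ logMeanExp w (fun a => -D a - c * S a) b + (c - b) * M :=
        logMeanExp_le_add_of_le hw₀ hw₁ hb fun a => by nlinarith [hSM a]
    _ ≤ potential w D S c + (c - b) * M := by
        gcongr; exact logMeanExp_mono hw₀ hw₁ _ hb hbc

lemma potential_const (r : ℝ) (D S : ι → ℝ) (x : ℝ) :
    potential (fun _ => r) D S x = 1 / x * log (r * ∑ a, exp (-x * D a - x ^ 2 * S a)) := by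
  simp only [potential, logMeanExp, mul_sum, one_div]; ring_nf

lemma potential_sub_le_of_sqrt_rates (hw₀ : ∀ a, 0 ≤ w a) (hw₁ : ∑ a, w a = 1) (D : ι → ℝ)
    {S : ι → ℝ} {M L u v : ℝ} (hSM : ∀ a, S a ≤ M) (hL : 0 < L) (hu : 0 < u) (huv : u ≤ v) :
    potential w D S (L * (1 / √v)) - potential w D S (L * (1 / √u))
      ≤ L * (M * (1 / √u - 1 / √v)) := by
  have hv : 0 < v := hu.trans_le huv
  have hrates : L * (1 / √v) ≤ L * (1 / √u) := by gcongr
  have := potential_le_add_of_le hw₀ hw₁ D hSM (by positivity) hrates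
  linarith

end LogMeanExp

lemma mul_one_div_sqrt_sub_le {m u v : ℝ} (hu : 0 < u) (huv : u ≤ v) (hmu : m ≤ u) :
    m * (1 / √u - 1 / √v) ≤ √v - √u := by
  have hsu : 0 < √u := sqrt_pos.2 hu
  have hsv : 0 < √v := hsu.trans_le (sqrt_le_sqrt huv)
  have hle : √u ≤ √v := sqrt_le_sqrt huv
  have hdiff : 1 / √u - 1 / √v = (√v - √u) / (√u * √v) := by field_simp
  calc m * (1 / √u - 1 / √v) ≤ √u ^ 2 * ((√v - √u) / (√u * √v)) := by
        rw [hdiff, sq_sqrt hu.le]; gcongr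
    _ = (√v - √u) * (√u / √v) := by field_simp
    _ ≤ (√v - √u) * 1 := by gcongr; exact (div_le_one hsv).2 hle
    _ = √v - √u := mul_one _

lemma sum_Icc_sub_pred {G : Type*} [AddCommGroup G] (g : ℕ → G) (T : ℕ) :
    ∑ t ∈ Icc 1 T, (g t - g (t - 1)) = g T - g 0 := by
  induction T with
  | zero => simp
  | succ n ih => rw [sum_Icc_succ_top (by omega), ih, Nat.add_sub_cancel]; abel

lemma sum_mul_one_div_sqrt_sub_le {σ : ℕ → ℝ} {c : ℝ} (hc : 0 < c) (hσ₀ : ∀ t, 0 ≤ σ t)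
    (hσ : Monotone σ) (hstep : ∀ t, σ (t + 1) ≤ σ t + c) (T : ℕ) :
    ∑ t ∈ Icc 1 T, σ t * (1 / √(σ (t - 1) + c) - 1 / √(σ t + c))
      ≤ 2 * √(σ (T - 1) + c) := by
  have hterm : ∀ t ∈ Icc 1 T, σ t * (1 / √(σ (t - 1) + c) - 1 / √(σ t + c))
      ≤ √(σ t + c) - √(σ (t - 1) + c) := by
    intro t ht
    obtain ⟨s, rfl⟩ : ∃ s, t = s + 1 := ⟨t - 1, by grind⟩
    simp only [Nat.add_sub_cancel]
    exact mul_one_div_sqrt_sub_le (by linarith [hσ₀ s]) (by linarith [hσ s.le_succ])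
      (hstep s)
  refine (sum_le_sum hterm).trans ?_
  rw [sum_Icc_sub_pred (fun t => √(σ t + c))]
  have h0 : 0 ≤ √(σ 0 + c) := sqrt_nonneg _
  rcases T with _ | n
  · linarith
  · have : √(σ (n + 1) + c) ≤ √(2 ^ 2 * (σ n + c)) :=
      sqrt_le_sqrt (by linarith [hstep n, hσ₀ n])
    rw [sqrt_mul (by positivity), sqrt_sq two_pos.le] at this
    simpa using (by linarith : √(σ (n + 1) + c) - √(σ 0 + c) ≤ 2 * √(σ n + c))

theorem potential_differences_sum_bound_general
    (K : ℕ) (hK : 2 ≤ K)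
    (D S : ℕ → Fin K → ℝ)
    (hS_nonneg : ∀ t a, 0 ≤ S t a)
    (hS_mono : ∀ t a, S t a ≤ S (t + 1) a)
    (hS_step : ∀ t a, S (t + 1) a - S t a ≤ ((K : ℝ) - 1) ^ 2)
    (Φ : ℕ → ℝ → ℝ)
    (hΦ : ∀ t x, Φ t x =
      (1 / x) * Real.log ((1 / K) * ∑ a, Real.exp (-x * D t a - x ^ 2 * S t a)))
    (η : ℕ → ℝ)
    (hη : ∀ t : ℕ, 1 ≤ t →
      η t = Real.sqrt (Real.log K / ((⨆ a, S (t - 1) a) + ((K : ℝ) - 1) ^ 2)))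
    (T : ℕ) :
    ∑ t ∈ Finset.Icc 1 T, (Φ t (η (t + 1)) - Φ t (η t))
      ≤ 2 * Real.sqrt (Real.log K) *
          Real.sqrt ((⨆ a, S (T - 1) a) + ((K : ℝ) - 1) ^ 2) := by
  have hK' : (2 : ℝ) ≤ K := by exact_mod_cast hK
  have hlogK : 0 < log K := log_pos (by linarith)
  set c := ((K : ℝ) - 1) ^ 2
  have hc : 0 < c := by nlinarith
  set σ : ℕ → ℝ := fun t => ⨆ a, S t a
  have hSσ : ∀ t a, S t a ≤ σ t := fun t a => le_ciSup (Finite.bddAbove_range _) a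
  have hσ₀ : ∀ t, 0 ≤ σ t := fun t => Real.iSup_nonneg (hS_nonneg t)
  have hσ : Monotone σ := monotone_nat_of_le_succ fun t =>
    ciSup_mono (Finite.bddAbove_range _) (hS_mono t)
  have hstep : ∀ t, σ (t + 1) ≤ σ t + c := fun t =>
    Real.iSup_le (fun a => by linarith [hS_step t a, hSσ t a]) (by linarith [hσ₀ t])
  have hw₁ : ∑ _a : Fin K, (1 / K : ℝ) = 1 := by
    rw [sum_const, card_univ, Fintype.card_fin, nsmul_eq_mul]; field_simp
  have hΦ_eq : ∀ t x, Φ t x = potential (fun _ => 1 / K) (D t) (S t) x := fun t x =>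
    (hΦ t x).trans (potential_const _ _ _ x).symm
  have hη_eq : ∀ t, η (t + 1) = √(log K) * (1 / √(σ t + c)) := fun t => by
    rw [hη _ (Nat.le_add_left 1 t), Nat.add_sub_cancel, sqrt_div hlogK.le, mul_one_div]
  have hterm : ∀ t ∈ Icc 1 T, Φ t (η (t + 1)) - Φ t (η t) ≤
      √(log K) * (σ t * (1 / √(σ (t - 1) + c) - 1 / √(σ t + c))) := by
    intro t ht
    obtain ⟨s, rfl⟩ : ∃ s, t = s + 1 := ⟨t - 1, by grind⟩
    rw [hΦ_eq, hΦ_eq, hη_eq, hη_eq, Nat.add_sub_cancel]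
    exact potential_sub_le_of_sqrt_rates (fun _ => by positivity) hw₁ _ (hSσ (s + 1))
      (sqrt_pos.2 hlogK) (by linarith [hσ₀ s]) (by linarith [hσ s.le_succ])
  calc ∑ t ∈ Icc 1 T, (Φ t (η (t + 1)) - Φ t (η t))
      ≤ √(log K) * ∑ t ∈ Icc 1 T, σ t * (1 / √(σ (t - 1) + c) - 1 / √(σ t + c)) := by
        rw [mul_sum]; exact sum_le_sum hterm
    _ ≤ √(log K) * (2 * √(σ (T - 1) + c)) := by
        gcongr; exact sum_mul_one_div_sqrt_sub_le hc hσ₀ hσ hstep T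
    _ = _ := by ring

/-- Let `K ≥ 2`, let `D_t(a)` be arbitrary reals and `S_t(a)` nonnegative
reals for `t ≥ 0` and `a = 1,…,K`, with `S_0(a) = 0`, `S_t(a)` nondecreasing in `t`, and
`S_t(a) − S_{t−1}(a) ≤ (K−1)²`. Define
`Φ_t(η) = (1/η) ln( (1/K) Σ_a exp(−η D_t(a) − η² S_t(a)) )` and learning rates
`η_t = √( ln K / (max_a S_{t−1}(a) + (K−1)²) )`. Then for every `T ≥ 1`:
`Σ_{t=1}^T ( Φ_t(η_{t+1}) − Φ_t(η_t) ) ≤ 2 √(ln K) · √( max_a S_{T−1}(a) + (K−1)² )`. -/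
theorem potential_differences_sum_bound
    (K : ℕ) (hK : 2 ≤ K)
    (D S : ℕ → Fin K → ℝ)
    (hS0 : ∀ a, S 0 a = 0)
    (hS_nonneg : ∀ t a, 0 ≤ S t a)
    (hS_mono : ∀ t a, S t a ≤ S (t + 1) a)
    (hS_step : ∀ t a, S (t + 1) a - S t a ≤ ((K : ℝ) - 1) ^ 2)
    (Φ : ℕ → ℝ → ℝ)
    (hΦ : ∀ t x, Φ t x =
      (1 / x) * Real.log ((1 / K) * ∑ a, Real.exp (-x * D t a - x ^ 2 * S t a)))
    (η : ℕ → ℝ)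
    (hη : ∀ t : ℕ, 1 ≤ t →
      η t = Real.sqrt (Real.log K / ((⨆ a, S (t - 1) a) + ((K : ℝ) - 1) ^ 2)))
    (T : ℕ) (hT : 1 ≤ T) :
    ∑ t ∈ Finset.Icc 1 T, (Φ t (η (t + 1)) - Φ t (η t))
      ≤ 2 * Real.sqrt (Real.log K) *
          Real.sqrt ((⨆ a, S (T - 1) a) + ((K : ℝ) - 1) ^ 2) :=
  potential_differences_sum_bound_general K hK D S hS_nonneg hS_mono hS_step Φ hΦ η hη T
end

section
/- Let Y_1, …, Y_T be {0,1}-valued random variables adapted to a filtration (F_t) such that P(Y_t = 1 | F_{t−1}) ≤ p almost surely for all t, where p ∈ [0,1]. Let x_1, …, x_T be i.i.d. Bernoulli random variables with parameter p. Then for every real α: P( Σ_{t=1}^T Y_t > α ) ≤ P( Σ_{t=1}^T x_t > α ). -/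
open MeasureTheory ProbabilityTheory

/-!
Both tails satisfy the recursion `G_{n+1}(β) = (1 - p) G_n(β) + p G_n(β - 1)`, the Bernoulli
sums with equality (condition on the independent last trial), the adapted sums with `≤`:
`β < S_n + Y_{n+1}` differs from `β < S_n` only on the `ℱ n`-measurable set
`{β - 1 < S_n ≤ β}`, where it is the event `Y_{n+1} = 1`, of conditional probability `≤ p`.
The recursion has nonnegative coefficients, so induction on `n` compares the two tails.
-/

/-- `binomialTail p n β` is `P(Bin(n, p) > β)`, computed by conditioning on the last trial. -/
noncomputable def binomialTail (p : ℝ) : ℕ → ℝ → ℝ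
  | 0, β => if β < 0 then 1 else 0
  | n + 1, β => (1 - p) * binomialTail p n β + p * binomialTail p n (β - 1)

section CondExpBound

variable {Ω : Type*} {m m0 : MeasurableSpace Ω} {μ : Measure Ω} [IsFiniteMeasure μ]

lemma setIntegral_le_of_condExp_le (hm : m ≤ m0) {Y : Ω → ℝ} {c : ℝ} (hY : Integrable Y μ)
    (hcond : μ[Y|m] ≤ᵐ[μ] fun _ => c) {B : Set Ω} (hB : MeasurableSet[m] B) :
    ∫ ω in B, Y ω ∂μ ≤ c * μ.real B := by
  rw [← setIntegral_condExp hm hY hB]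
  calc ∫ ω in B, (μ[Y|m]) ω ∂μ ≤ ∫ _ in B, c ∂μ :=
        setIntegral_mono_ae integrable_condExp.integrableOn (integrable_const c).integrableOn hcond
    _ = c * μ.real B := by rw [setIntegral_const, smul_eq_mul, mul_comm]

lemma measureReal_lt_add_le_of_condExp_le (hm : m ≤ m0) {Z Y : Ω → ℝ} {p : ℝ}
    (hZ : Measurable[m] Z) (hY : Measurable Y) (hY01 : ∀ ω, Y ω = 0 ∨ Y ω = 1)
    (hcond : μ[Y|m] ≤ᵐ[μ] fun _ => p) (β : ℝ) :
    μ.real {ω | β < Z ω + Y ω}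
      ≤ (1 - p) * μ.real {ω | β < Z ω} + p * μ.real {ω | β - 1 < Z ω} := by
  set C := {ω | β < Z ω}
  set D := {ω | β - 1 < Z ω}
  have hC : MeasurableSet[m] C := measurableSet_lt measurable_const hZ
  have hD : MeasurableSet[m] D := measurableSet_lt measurable_const hZ
  have hCD : C ⊆ D := fun ω (h : β < Z ω) => show β - 1 < Z ω by linarith
  have hYint : Integrable Y μ := by
    refine (integrable_const (1 : ℝ)).mono' hY.aestronglyMeasurable (ae_of_all _ fun ω => ?_)
    rcases hY01 ω with h | h <;> simp [h]
  -- On `D \ C` the event `β < Z + Y` is exactly `Y = 1`; on `C` it is sure, off `D` impossible.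
  have hsplit : {ω | β < Z ω + Y ω}.indicator 1 = C.indicator 1 + (D \ C).indicator Y := by
    ext ω
    simp only [Set.indicator, Set.mem_ofPred_eq, Set.mem_sdiff, Pi.add_apply, Pi.one_apply, C, D]
    rcases hY01 ω with h | h <;> rw [h] <;> split_ifs <;> grind
  have hμ : μ.real {ω | β < Z ω + Y ω} = μ.real C + ∫ ω in D \ C, Y ω ∂μ := by
    have hA : MeasurableSet {ω | β < Z ω + Y ω} :=
      measurableSet_lt measurable_const ((hZ.mono hm le_rfl).add hY)
    have hC' : MeasurableSet C := hm _ hC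
    have hDC : MeasurableSet (D \ C) := hm _ (hD.diff hC)
    rw [← integral_indicator_one hA, hsplit, Pi.add_def,
      integral_add (f := C.indicator 1) ((integrable_const 1).indicator hC') (hYint.indicator hDC),
      integral_indicator_one hC', integral_indicator hDC]
  have hB := setIntegral_le_of_condExp_le hm hYint hcond (hD.diff hC)
  rw [measureReal_sdiff hCD (hm _ hC)] at hB
  linarith

end CondExpBound

lemma measure_lt_add_of_indepFun_bernoulli {Ω : Type*} [MeasurableSpace Ω] {μ : Measure Ω}
    [IsFiniteMeasure μ] {Z X : Ω → ℝ} {p : ℝ} (hZ : Measurable Z) (hX : Measurable X)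
    (hind : IndepFun Z X μ)
    (hlaw : μ.map X = ENNReal.ofReal (1 - p) • Measure.dirac 0 + ENNReal.ofReal p • Measure.dirac 1)
    (β : ℝ) :
    μ {ω | β < Z ω + X ω}
      = ENNReal.ofReal (1 - p) * μ {ω | β < Z ω} + ENNReal.ofReal p * μ {ω | β - 1 < Z ω} := by
  have hs : MeasurableSet {q : ℝ × ℝ | β < q.1 + q.2} :=
    measurableSet_lt measurable_const (measurable_fst.add measurable_snd)
  calc μ {ω | β < Z ω + X ω} = μ.map (fun ω => (Z ω, X ω)) {q | β < q.1 + q.2} :=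
        (Measure.map_apply (hZ.prodMk hX) hs).symm
    _ = ((μ.map Z).prod (μ.map X)) {q | β < q.1 + q.2} := by
        rw [(indepFun_iff_map_prod_eq_prod_map_map hZ.aemeasurable hX.aemeasurable).1 hind]
    _ = _ := by
        rw [Measure.prod_apply_symm hs, hlaw, lintegral_add_measure, lintegral_smul_measure,
          lintegral_smul_measure, lintegral_dirac, lintegral_dirac,
          Measure.map_apply hZ (measurable_prodMk_right hs),
          Measure.map_apply hZ (measurable_prodMk_right hs)]
        simp only [smul_eq_mul, Set.preimage_ofPred_eq, add_zero, sub_lt_iff_lt_add]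

lemma measureReal_lt_sum_le_binomialTail {Ω : Type*} {m0 : MeasurableSpace Ω} {μ : Measure Ω}
    [IsProbabilityMeasure μ] (ℱ : Filtration ℕ m0) {Y : ℕ → Ω → ℝ} {p : ℝ} (hp0 : 0 ≤ p)
    (hp1 : p ≤ 1) (n : ℕ) (hY01 : ∀ t < n, ∀ ω, Y t ω = 0 ∨ Y t ω = 1)
    (hY : ∀ t < n, StronglyMeasurable[ℱ (t + 1)] (Y t))
    (hcond : ∀ t < n, μ[Y t|ℱ t] ≤ᵐ[μ] fun _ => p) (β : ℝ) :
    μ.real {ω | β < ∑ t ∈ Finset.range n, Y t ω} ≤ binomialTail p n β := by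
  induction n generalizing β with
  | zero => by_cases hβ : β < 0 <;> simp [binomialTail, hβ]
  | succ n ih =>
    have hS : Measurable[ℱ n] fun ω => ∑ t ∈ Finset.range n, Y t ω :=
      Finset.measurable_sum _ fun t ht => (hY t (by grind)).measurable.mono
        (ℱ.mono (Finset.mem_range.1 ht)) le_rfl
    have ih' := ih (fun t ht => hY01 t (by omega)) (fun t ht => hY t (by omega))
      (fun t ht => hcond t (by omega))
    simp_rw [Finset.sum_range_succ]
    calc _ ≤ (1 - p) * μ.real {ω | β < ∑ t ∈ Finset.range n, Y t ω}
          + p * μ.real {ω | β - 1 < ∑ t ∈ Finset.range n, Y t ω} :=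
          measureReal_lt_add_le_of_condExp_le (ℱ.le n) hS
            ((hY n n.lt_succ_self).measurable.mono (ℱ.le _) le_rfl) (hY01 n n.lt_succ_self)
            (hcond n n.lt_succ_self) β
      _ ≤ binomialTail p (n + 1) β := by
          have := sub_nonneg.2 hp1
          rw [binomialTail]
          gcongr
          exacts [ih' β, ih' (β - 1)]

lemma measureReal_lt_sum_eq_binomialTail {Ω ι : Type*} [MeasurableSpace Ω] {μ : Measure Ω}
    [IsProbabilityMeasure μ] {x : ι → Ω → ℝ} {p : ℝ} (hp0 : 0 ≤ p) (hp1 : p ≤ 1)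
    (hx_meas : ∀ i, Measurable (x i)) (hx_indep : iIndepFun x μ)
    (hx_law : ∀ i, μ.map (x i) =
      ENNReal.ofReal (1 - p) • Measure.dirac (0 : ℝ) + ENNReal.ofReal p • Measure.dirac 1)
    (s : Finset ι) (β : ℝ) :
    μ.real {ω | β < ∑ i ∈ s, x i ω} = binomialTail p s.card β := by
  classical
  induction s using Finset.induction_on generalizing β with
  | empty => by_cases hβ : β < 0 <;> simp [binomialTail, hβ]
  | insert i s hi ih =>
    have hind : IndepFun (fun ω => ∑ j ∈ s, x j ω) (x i) μ := by
      simpa only [Finset.sum_fn] using hx_indep.indepFun_finsetSum_of_notMem hx_meas hi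
    simp_rw [Finset.sum_insert hi, add_comm (x i _), Finset.card_insert_of_notMem hi,
      binomialTail, ← ih, measureReal_def, measure_lt_add_of_indepFun_bernoulli
        (Finset.measurable_sum _ fun j _ => hx_meas j) (hx_meas i) hind (hx_law i)]
    rw [ENNReal.toReal_add (by finiteness) (by finiteness), ENNReal.toReal_mul,
      ENNReal.toReal_mul, ENNReal.toReal_ofReal hp0, ENNReal.toReal_ofReal (sub_nonneg.2 hp1)]

/-- Let `Y_1, …, Y_T` be `{0,1}`-valued random variables adapted to a
filtration `(F_t)` such that `P(Y_t = 1 | F_{t−1}) ≤ p` almost surely for all `t`, where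
`p ∈ [0,1]`. Let `x_1, …, x_T` be i.i.d. Bernoulli random variables with parameter `p`.
Then for every real `α`: `P( Σ_{t=1}^T Y_t > α ) ≤ P( Σ_{t=1}^T x_t > α )`.
(Here `Y_t` corresponds to `Y (t+1)` for `t ∈ {0,…,T−1}`, conditioned on `ℱ t`, and since
`Y_t ∈ {0,1}` the conditional probability `P(Y_t = 1 | F_{t−1})` equals the conditional
expectation `μ[Y_t | F_{t−1}]`.) -/
theorem stochastic_domination_by_bernoulli
    {Ω Ω' : Type*} [m : MeasurableSpace Ω] [m' : MeasurableSpace Ω']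
    (μ : Measure Ω) (μ' : Measure Ω')
    [IsProbabilityMeasure μ] [IsProbabilityMeasure μ']
    (T : ℕ) (p : ℝ) (hp : p ∈ Set.Icc (0 : ℝ) 1)
    (ℱ : Filtration ℕ m)
    (Y : ℕ → Ω → ℝ)
    (hY01 : ∀ t < T, ∀ ω, Y (t + 1) ω = 0 ∨ Y (t + 1) ω = 1)
    (hY_adapted : ∀ t < T, StronglyMeasurable[ℱ (t + 1)] (Y (t + 1)))
    (hY_cond : ∀ t < T, μ[Y (t + 1)|ℱ t] ≤ᵐ[μ] fun _ => p)
    (x : Fin T → Ω' → ℝ)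
    (hx_meas : ∀ i, Measurable (x i))
    (hx_indep : iIndepFun x μ')
    (hx_law : ∀ i, μ'.map (x i) =
      ENNReal.ofReal (1 - p) • Measure.dirac (0 : ℝ) + ENNReal.ofReal p • Measure.dirac 1)
    (α : ℝ) :
    μ {ω | α < ∑ t ∈ Finset.range T, Y (t + 1) ω}
      ≤ μ' {ω | α < ∑ i, x i ω} := by
  obtain ⟨hp0, hp1⟩ := hp
  have hY := measureReal_lt_sum_le_binomialTail ℱ (Y := fun t => Y (t + 1)) hp0 hp1 T hY01
    hY_adapted hY_cond α
  have hx := measureReal_lt_sum_eq_binomialTail hp0 hp1 hx_meas hx_indep hx_law Finset.univ α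
  rw [Finset.card_univ, Fintype.card_fin] at hx
  rw [← ENNReal.toReal_le_toReal (measure_ne_top _ _) (measure_ne_top _ _)]
  exact hY.trans hx.ge
end

section
/- Let K ≥ 2 and T ≥ 2, and let B_1, …, B_{T−1} be random variables taking values in {1,…,K}, adapted to a filtration (F_t), such that P(B_t = a | F_{t−1}) ≤ 1/(K−1) almost surely for every t and every arm a. Define Z^a = Σ_{t=1}^{T−1} 1(B_t = a). Then E[ max_{a ∈ {1,…,K}} Z^a ] ≤ (T−1)/(K−1) + √( (T/2) ln( √T (K−1) ) ) + 2√T. -/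
/-!
Fix an arm `a`. Since `P(B_t = a | F_{t-1}) ≤ p := 1/(K-1)`, Hoeffding's lemma for a Bernoulli
variable bounds the conditional moment generating function of each increment `1(B_t = a)` by
`exp (p λ + λ² / 8)`; peeling off one step at a time gives `E[exp (λ Z^a)] ≤ exp (p λ + λ² / 8)^n`
with `n = T - 1`, and Chernoff's bound with `λ = 4δ/n` gives `P(Z^a ≥ n p + δ) ≤ exp (-2δ²/n)`.
Truncating at `α = n p + δ` and using `Z^a ≤ n`, a union bound over the arms yields
`E[max_a Z^a] ≤ α + n K exp (-2δ²/n)`, and the choice of `δ` makes the last term at most `2√T`.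
-/

open MeasureTheory ProbabilityTheory Real

lemma one_add_mul_exp_sub_one_le_exp {q : ℝ} (hq0 : 0 ≤ q) (hq1 : q ≤ 1) (l : ℝ) :
    1 + q * (exp l - 1) ≤ exp (q * l + l ^ 2 / 8) := by
  set ν : Measure ℝ := bernoulliMeasure 1 0 ⟨q, hq0, hq1⟩
  have hsupp : ∀ᵐ x ∂ν, x ∈ Set.Icc (0 : ℝ) 1 := by
    rw [ae_iff]
    exact bernoulliMeasure_apply_of_notMem_of_notMem _ measurableSet_Icc.compl
      (by norm_num) (by norm_num)
  have hmgf := (hasSubgaussianMGF_of_mem_Icc measurable_id.aemeasurable hsupp).mgf_le l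
  simp only [mgf, id, ν, integral_bernoulliMeasure] at hmgf
  norm_num at hmgf
  have h₁ : exp (q * l) * exp (l * (1 - q)) = exp l := by rw [← exp_add]; ring_nf
  have h₂ : exp (q * l) * exp (-(l * q)) = 1 := by rw [← exp_add]; ring_nf; exact exp_zero
  calc 1 + q * (exp l - 1)
      = exp (q * l) * (q * exp (l * (1 - q)) + (1 - q) * exp (-(l * q))) := by
        linear_combination (-q) * h₁ - (1 - q) * h₂
    _ ≤ exp (q * l) * exp (1 / 4 * l ^ 2 / 2) := by gcongr
    _ = exp (q * l + l ^ 2 / 8) := by rw [← exp_add]; ring_nf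

section

variable {Ω : Type*} {m m₀ : MeasurableSpace Ω} {μ : Measure Ω}

lemma integral_mul_le_of_condExp_le [IsFiniteMeasure μ] (hm : m ≤ m₀) {f g : Ω → ℝ}
    {c C : ℝ} (hf : StronglyMeasurable[m] f) (hf_mem : ∀ ω, f ω ∈ Set.Icc 0 c)
    (hg : Integrable g μ) (hgC : μ[g|m] ≤ᵐ[μ] fun _ => C) :
    ∫ ω, f ω * g ω ∂μ ≤ C * ∫ ω, f ω ∂μ := by
  have hf_int : Integrable f μ :=
    .of_mem_Icc 0 c (hf.mono hm).measurable.aemeasurable (.of_forall hf_mem)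
  have hpull : μ[f * g|m] =ᵐ[μ] f * μ[g|m] :=
    condExp_stronglyMeasurable_mul_of_bound hm hf hg c
      (.of_forall fun ω => by rw [norm_of_nonneg (hf_mem ω).1]; exact (hf_mem ω).2)
  calc ∫ ω, f ω * g ω ∂μ = ∫ ω, (μ[f * g|m]) ω ∂μ := (integral_condExp hm).symm
    _ = ∫ ω, f ω * (μ[g|m]) ω ∂μ := integral_congr_ae hpull
    _ ≤ ∫ ω, C * f ω ∂μ := by
        refine integral_mono_ae (integrable_condExp.congr hpull) (hf_int.const_mul C) ?_
        filter_upwards [hgC] with ω hω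
        rw [mul_comm C]
        exact mul_le_mul_of_nonneg_left hω (hf_mem ω).1
    _ = C * ∫ ω, f ω ∂μ := integral_const_mul C f

lemma exp_mul_indicator_one (s : Set Ω) (l : ℝ) :
    (fun ω => exp (l * s.indicator 1 ω))
      = (fun _ => (1 : ℝ)) + (exp l - 1) • s.indicator 1 := by
  ext ω
  by_cases hω : ω ∈ s <;> simp [hω]

lemma condExp_exp_mul_indicator_le [IsFiniteMeasure μ] (hm : m ≤ m₀) {s : Set Ω}
    (hs : MeasurableSet s) {p l : ℝ} (hp0 : 0 ≤ p) (hp1 : p ≤ 1) (hl : 0 ≤ l)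
    (hcond : μ[s.indicator 1|m] ≤ᵐ[μ] fun _ => p) :
    μ[fun ω => exp (l * s.indicator 1 ω)|m] ≤ᵐ[μ] fun _ => exp (p * l + l ^ 2 / 8) := by
  have hs_int : Integrable (s.indicator (1 : Ω → ℝ)) μ := (integrable_const 1).indicator hs
  have hlin : μ[fun ω => exp (l * s.indicator 1 ω)|m]
      =ᵐ[μ] (fun _ => (1 : ℝ)) + (exp l - 1) • μ[s.indicator 1|m] := by
    rw [exp_mul_indicator_one]
    refine (condExp_add (integrable_const 1) (hs_int.smul _) m).trans ?_
    rw [condExp_const hm]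
    exact (condExp_smul _ _ _).add_left
  filter_upwards [hlin, hcond] with ω hω hpω
  rw [hω]
  calc 1 + (exp l - 1) * (μ[s.indicator 1|m]) ω ≤ 1 + p * (exp l - 1) := by
        rw [mul_comm p]
        gcongr
        exact sub_nonneg.2 (one_le_exp hl)
    _ ≤ exp (p * l + l ^ 2 / 8) := one_add_mul_exp_sub_one_le_exp hp0 hp1 l

lemma sum_indicator_one_mem_Icc (A : ℕ → Set Ω) (n : ℕ) (ω : Ω) :
    ∑ t ∈ Finset.range n, (A t).indicator (1 : Ω → ℝ) ω ∈ Set.Icc 0 (n : ℝ) := by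
  refine ⟨Finset.sum_nonneg fun t _ => Set.indicator_nonneg (fun _ _ => zero_le_one) ω, ?_⟩
  have h := Finset.sum_le_card_nsmul (Finset.range n)
    (fun t => (A t).indicator (1 : Ω → ℝ) ω) 1
    fun t _ => Set.indicator_le_self' (fun _ _ => zero_le_one) ω
  simpa using h

lemma measurable_sum_indicator_one {A : ℕ → Set Ω} {n : ℕ}
    (hA : ∀ t < n, MeasurableSet[m] (A t)) :
    Measurable[m] fun ω => ∑ t ∈ Finset.range n, (A t).indicator (1 : Ω → ℝ) ω :=
  Finset.measurable_fun_sum _ fun t ht =>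
    measurable_const.indicator (hA t (Finset.mem_range.1 ht))

variable [IsProbabilityMeasure μ] {ℱ : Filtration ℕ m₀}

lemma mgf_sum_indicator_le {A : ℕ → Set Ω} {n : ℕ} {p l : ℝ}
    (hA : ∀ t < n, MeasurableSet[ℱ (t + 1)] (A t))
    (hcond : ∀ t < n, μ[(A t).indicator 1|ℱ t] ≤ᵐ[μ] fun _ => p)
    (hp0 : 0 ≤ p) (hp1 : p ≤ 1) (hl : 0 ≤ l) :
    mgf (fun ω => ∑ t ∈ Finset.range n, (A t).indicator 1 ω) μ l
      ≤ exp (p * l + l ^ 2 / 8) ^ n := by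
  induction n with
  | zero => simp [mgf]
  | succ n ih =>
    have hSn := measurable_sum_indicator_one fun t (ht : t < n) =>
      ℱ.mono ht _ (hA t (by omega))
    have hAn : MeasurableSet (A n) := ℱ.le (n + 1) _ (hA n n.lt_succ_self)
    have hg : Integrable (fun ω => exp (l * (A n).indicator 1 ω)) μ := by
      rw [exp_mul_indicator_one]
      exact (integrable_const 1).add (((integrable_const 1).indicator hAn).smul _)
    calc mgf (fun ω => ∑ t ∈ Finset.range (n + 1), (A t).indicator 1 ω) μ l
        = ∫ ω, exp (l * ∑ t ∈ Finset.range n, (A t).indicator 1 ω)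
            * exp (l * (A n).indicator 1 ω) ∂μ := by
          simp only [mgf, Finset.sum_range_succ, mul_add, exp_add]
      _ ≤ exp (p * l + l ^ 2 / 8)
            * mgf (fun ω => ∑ t ∈ Finset.range n, (A t).indicator 1 ω) μ l :=
          integral_mul_le_of_condExp_le (c := exp (l * n)) (ℱ.le n)
            (hSn.const_mul l).exp.stronglyMeasurable
            (fun ω => ⟨(exp_pos _).le, exp_le_exp.2 <|
              mul_le_mul_of_nonneg_left (sum_indicator_one_mem_Icc A n ω).2 hl⟩)
            hg (condExp_exp_mul_indicator_le (ℱ.le n) hAn hp0 hp1 hl (hcond n n.lt_succ_self))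
      _ ≤ exp (p * l + l ^ 2 / 8) * exp (p * l + l ^ 2 / 8) ^ n := by
          gcongr
          exact ih (fun t ht => hA t (by omega)) (fun t ht => hcond t (by omega))
      _ = exp (p * l + l ^ 2 / 8) ^ (n + 1) := (pow_succ' _ _).symm

lemma measureReal_sum_indicator_ge_le {A : ℕ → Set Ω} {n : ℕ} {p δ : ℝ}
    (hA : ∀ t < n, MeasurableSet[ℱ (t + 1)] (A t))
    (hcond : ∀ t < n, μ[(A t).indicator 1|ℱ t] ≤ᵐ[μ] fun _ => p)
    (hp0 : 0 ≤ p) (hp1 : p ≤ 1) (hδ : 0 ≤ δ) :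
    μ.real {ω | n * p + δ ≤ ∑ t ∈ Finset.range n, (A t).indicator 1 ω}
      ≤ exp (-2 * δ ^ 2 / n) := by
  -- the optimal Chernoff parameter; for `n = 0` both sides are `1`, as `x / 0 = 0`
  set l : ℝ := 4 * δ / n
  have hl : 0 ≤ l := by positivity
  have hS := measurable_sum_indicator_one fun t ht => ℱ.le (t + 1) _ (hA t ht)
  have hint : Integrable (fun ω => exp (l * ∑ t ∈ Finset.range n, (A t).indicator 1 ω)) μ :=
    .of_mem_Icc 0 (exp (l * n)) (hS.const_mul l).exp.aemeasurable <| .of_forall fun ω =>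
      ⟨(exp_pos _).le,
        exp_le_exp.2 <| mul_le_mul_of_nonneg_left (sum_indicator_one_mem_Icc A n ω).2 hl⟩
  calc μ.real {ω | n * p + δ ≤ ∑ t ∈ Finset.range n, (A t).indicator 1 ω}
      ≤ exp (-l * (n * p + δ))
          * mgf (fun ω => ∑ t ∈ Finset.range n, (A t).indicator 1 ω) μ l :=
        measure_ge_le_exp_mul_mgf _ hl hint
    _ ≤ exp (-l * (n * p + δ)) * exp (p * l + l ^ 2 / 8) ^ n := by
        gcongr
        exact mgf_sum_indicator_le hA hcond hp0 hp1 hl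
    _ = exp (-2 * δ ^ 2 / n) := by
        rw [← exp_nat_mul, ← exp_add]
        congr 1
        rcases n.eq_zero_or_pos with hn | hn
        · simp [l, hn]
        · simp only [l]
          field_simp
          ring

lemma integral_iSup_le_add_mul_sum_measureReal_ge {ι : Type*} [Fintype ι] [Nonempty ι]
    {Z : ι → Ω → ℝ} {M α : ℝ} (hZ : ∀ i, Measurable (Z i))
    (hZ_mem : ∀ i ω, Z i ω ∈ Set.Icc 0 M) (hα : 0 ≤ α) :
    ∫ ω, ⨆ i, Z i ω ∂μ ≤ α + M * ∑ i, μ.real {ω | α ≤ Z i ω} := by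
  have hsets : ∀ i, MeasurableSet {ω | α ≤ Z i ω} := fun i =>
    measurableSet_le measurable_const (hZ i)
  have hind_int : ∀ i, Integrable ({ω | α ≤ Z i ω}.indicator (1 : Ω → ℝ)) μ := fun i =>
    (integrable_const 1).indicator (hsets i)
  set G : Ω → ℝ := fun ω => α + M * ∑ i, {ω | α ≤ Z i ω}.indicator 1 ω
  have hsup_le : ∀ ω, ⨆ i, Z i ω ≤ G ω := fun ω => ciSup_le fun i => by
    have hsum : {ω | α ≤ Z i ω}.indicator (1 : Ω → ℝ) ω
        ≤ ∑ j, {ω | α ≤ Z j ω}.indicator 1 ω :=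
      Finset.single_le_sum (f := fun j => {ω | α ≤ Z j ω}.indicator (1 : Ω → ℝ) ω)
        (fun j _ => Set.indicator_nonneg (fun _ _ => zero_le_one) ω) (Finset.mem_univ i)
    have hM : 0 ≤ M := (hZ_mem i ω).1.trans (hZ_mem i ω).2
    by_cases hi : α ≤ Z i ω
    · have : M * {ω | α ≤ Z i ω}.indicator 1 ω = M := by simp [hi]
      nlinarith [(hZ_mem i ω).2]
    · have : 0 ≤ {ω | α ≤ Z i ω}.indicator (1 : Ω → ℝ) ω := by simp [hi]
      nlinarith
  have hG_int : Integrable (fun ω => M * ∑ i, {ω | α ≤ Z i ω}.indicator (1 : Ω → ℝ) ω) μ :=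
    (integrable_finsetSum _ fun i _ => hind_int i).const_mul M
  calc ∫ ω, ⨆ i, Z i ω ∂μ ≤ ∫ ω, G ω ∂μ :=
        integral_mono_of_nonneg (.of_forall fun ω =>
          (hZ_mem (Classical.arbitrary ι) ω).1.trans
            (le_ciSup (f := fun i => Z i ω) (Finite.bddAbove_range _) _))
          ((integrable_const α).add hG_int) (.of_forall hsup_le)
    _ = α + M * ∑ i, μ.real {ω | α ≤ Z i ω} := by
        simp only [G]
        rw [integral_add (integrable_const α) hG_int, integral_const_mul,
          integral_finsetSum _ fun i _ => hind_int i]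
        simp [integral_indicator_one (hsets _)]

lemma integral_iSup_sum_indicator_le {ι : Type*} [Fintype ι] [Nonempty ι]
    {A : ι → ℕ → Set Ω} {n : ℕ} {p δ : ℝ}
    (hA : ∀ i, ∀ t < n, MeasurableSet[ℱ (t + 1)] (A i t))
    (hcond : ∀ i, ∀ t < n, μ[(A i t).indicator 1|ℱ t] ≤ᵐ[μ] fun _ => p)
    (hp0 : 0 ≤ p) (hp1 : p ≤ 1) (hδ : 0 ≤ δ) :
    ∫ ω, ⨆ i, ∑ t ∈ Finset.range n, (A i t).indicator 1 ω ∂μ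
      ≤ n * p + δ + n * Fintype.card ι * exp (-2 * δ ^ 2 / n) := by
  calc _ ≤ n * p + δ + n * ∑ i, μ.real
          {ω | n * p + δ ≤ ∑ t ∈ Finset.range n, (A i t).indicator 1 ω} :=
        integral_iSup_le_add_mul_sum_measureReal_ge
          (fun i => measurable_sum_indicator_one fun t ht => ℱ.le (t + 1) _ (hA i t ht))
          (fun i => sum_indicator_one_mem_Icc (A i) n) (by positivity)
    _ ≤ n * p + δ + n * ∑ _i : ι, exp (-2 * δ ^ 2 / n) := by
        gcongr with i
        exact measureReal_sum_indicator_ge_le (hA i) (hcond i) hp0 hp1 hδ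
    _ = n * p + δ + n * Fintype.card ι * exp (-2 * δ ^ 2 / n) := by
        rw [Finset.sum_const, Finset.card_univ, nsmul_eq_mul, mul_assoc]

end

/-- `δ = √(T/2 · log (√T (K-1)))` is chosen so that `exp (-2δ²/T) = 1 / (√T (K-1))`. -/
lemma mul_mul_exp_neg_two_mul_sqrt_log_sq_div_le {n T K : ℝ} (hn : 1 ≤ n) (hnT : n ≤ T)
    (hK : 2 ≤ K) :
    n * K * exp (-2 * √(T / 2 * log (√T * (K - 1))) ^ 2 / n) ≤ 2 * √T := by
  have hsqrtT : √T * √T = T := mul_self_sqrt (by linarith)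
  have hsqrtT_one : 1 ≤ √T := one_le_sqrt.2 (hn.trans hnT)
  have hL : 0 ≤ log (√T * (K - 1)) := log_nonneg (by nlinarith)
  calc n * K * exp (-2 * √(T / 2 * log (√T * (K - 1))) ^ 2 / n)
      ≤ n * K * exp (-log (√T * (K - 1))) := by
        gcongr
        rw [sq_sqrt (mul_nonneg (by linarith) hL), div_le_iff₀ (by linarith)]
        nlinarith
    _ = n * K / (√T * (K - 1)) := by
        rw [exp_neg, exp_log (by nlinarith)]
        rfl
    _ ≤ 2 * √T := by
        rw [div_le_iff₀ (by nlinarith)]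
        nlinarith

/-- Let `K ≥ 2` and `T ≥ 2`, and let `B_1, …, B_{T−1}` be random variables
taking values in `{1,…,K}`, adapted to a filtration `(F_t)`, such that
`P(B_t = a | F_{t−1}) ≤ 1/(K−1)` almost surely for every `t` and every arm `a`. Define
`Z^a = Σ_{t=1}^{T−1} 1(B_t = a)`. Then
`E[ max_a Z^a ] ≤ (T−1)/(K−1) + √( (T/2) ln( √T (K−1) ) ) + 2√T`.
(Here `B_t` corresponds to `B (t+1)` for `t ∈ {0,…,T−2}`, and the conditional probability
of the event `{B_t = a}` given the past is expressed via the conditional expectation of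
its indicator.) -/
theorem expected_max_count_bound
    {Ω : Type*} [m : MeasurableSpace Ω] (μ : Measure Ω) [IsProbabilityMeasure μ]
    (K T : ℕ) (hK : 2 ≤ K) (hT : 2 ≤ T)
    (ℱ : Filtration ℕ m)
    (B : ℕ → Ω → Fin K)
    (hB_adapted : ∀ t < T - 1, Measurable[ℱ (t + 1)] (B (t + 1)))
    (hB_cond : ∀ t < T - 1, ∀ a : Fin K,
      μ[(fun ω => if B (t + 1) ω = a then (1 : ℝ) else 0)|ℱ t]
        ≤ᵐ[μ] fun _ => 1 / ((K : ℝ) - 1)) :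
    ∫ ω, (⨆ a : Fin K,
        ∑ t ∈ Finset.range (T - 1), (if B (t + 1) ω = a then (1 : ℝ) else 0)) ∂μ
      ≤ ((T : ℝ) - 1) / ((K : ℝ) - 1)
        + Real.sqrt (((T : ℝ) / 2) * Real.log (Real.sqrt T * ((K : ℝ) - 1)))
        + 2 * Real.sqrt T := by
  have : Nonempty (Fin K) := ⟨⟨0, by omega⟩⟩
  have hind : ∀ a t ω, (if B (t + 1) ω = a then (1 : ℝ) else 0)
      = {ω | B (t + 1) ω = a}.indicator 1 ω := by
    simp [Set.indicator_apply]
  simp only [hind] at hB_cond ⊢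
  have hK' : (2 : ℝ) ≤ K := by exact_mod_cast hK
  have hn : ((T - 1 : ℕ) : ℝ) = T - 1 := by rw [Nat.cast_sub (by omega), Nat.cast_one]
  have hn1 : (1 : ℝ) ≤ (T - 1 : ℕ) := by exact_mod_cast (by omega : 1 ≤ T - 1)
  have hcount := integral_iSup_sum_indicator_le (μ := μ) (ℱ := ℱ)
    (A := fun a t => {ω | B (t + 1) ω = a}) (δ := √((T : ℝ) / 2 * log (√T * ((K : ℝ) - 1))))
    (fun a t ht => hB_adapted t ht (measurableSet_singleton a)) (fun a t ht => hB_cond t ht a)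
    (one_div_nonneg.2 (by linarith)) ((div_le_one (by linarith)).2 (by linarith))
    (sqrt_nonneg _)
  have hunion := mul_mul_exp_neg_two_mul_sqrt_log_sq_div_le (T := T) hn1
    (by exact_mod_cast T.sub_le 1) hK'
  rw [Fintype.card_fin, hn, mul_one_div] at hcount
  rw [hn] at hunion
  linarith
end
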